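/- arXiv:1106.4837 — 3 statements merged into one kernel-verified Lean document; each statement's English description precedes it below -/
import Mathlib

section
/- Let K be a field of characteristic zero and n even. For every g ∈ SO(n,K) (that is, g·gᵀ = I and det g = 1) and all matrices A₁,…,A_{n/2} ∈ M(n,K), one has Q_n(g·A₁·g⁻¹, …, g·A_{n/2}·g⁻¹) = Q_n(A₁,…,A_{n/2}). -/
/-!
Write `Q_n` as the antisymmetrization `Σ_σ sgn σ · T(σ)` of the tensor
`T(f) = Π_i (A_i − A_iᵀ)(f(2i), f(2i+1))`. Conjugating every `A_i` by an orthogonal `g` replaces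
`A_i − A_iᵀ` by `g (A_i − A_iᵀ) gᵀ`, i.e. applies `g` to every slot of `T`; and antisymmetrization
turns that into multiplication by `det g`, because `Σ_σ sgn σ Π_k g(σ k, h k)` is the determinant of
`g` with its columns rearranged by `h`, which vanishes unless `h` is a permutation.
-/

open Matrix

/-- The function `Q_n : M(n,K)^{n/2} → K`,
`Q_n(A₁,…,A_{n/2}) = Σ_{σ ∈ S_n} sgn(σ) Π_i ((A_i)_{σ(2i−1),σ(2i)} − (A_i)_{σ(2i),σ(2i−1)})`
(indices written here in 0-based form). -/
noncomputable def Qfun (K : Type) [Field K] (n : ℕ)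
    (A : Fin (n / 2) → Matrix (Fin n) (Fin n) K) : K :=
  ∑ σ : Equiv.Perm (Fin n), ((Equiv.Perm.sign σ : ℤ) : K) *
    ∏ i : Fin (n / 2),
      (A i (σ ⟨2 * i.1, by have := i.isLt; omega⟩) (σ ⟨2 * i.1 + 1, by have := i.isLt; omega⟩)
        - A i (σ ⟨2 * i.1 + 1, by have := i.isLt; omega⟩) (σ ⟨2 * i.1, by have := i.isLt; omega⟩))

open Equiv Finset Function

section Tensor

variable {κ R : Type*} [Fintype κ] [DecidableEq κ] [CommRing R]

def altSum (T : (κ → κ) → R) : R :=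
  ∑ σ : Perm κ, ((Perm.sign σ : ℤ) : R) * T σ

def tensorMap (M : Matrix κ κ R) (T : (κ → κ) → R) (f : κ → κ) : R :=
  ∑ h : κ → κ, (∏ k, M (f k) (h k)) * T h

theorem Fintype.sum_eq_sum_perm_of_not_injective {M : Type*} [AddCommMonoid M] {F : (κ → κ) → M}
    (hF : ∀ h, ¬ Injective h → F h = 0) : ∑ h, F h = ∑ σ : Perm κ, F σ := by
  let coe : Perm κ ↪ (κ → κ) := ⟨(⇑), DFunLike.coe_injective⟩
  calc ∑ h, F h = ∑ h ∈ univ.map coe, F h := by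
        refine (Finset.sum_subset (subset_univ _) fun h _ hh => hF h fun hinj => hh ?_).symm
        exact mem_map.2 ⟨Equiv.ofBijective h (Finite.injective_iff_bijective.1 hinj), mem_univ _, rfl⟩
    _ = ∑ σ : Perm κ, F σ := sum_map _ _ _

theorem altSum_tensorMap (M : Matrix κ κ R) (T : (κ → κ) → R) :
    altSum (tensorMap M T) = M.det * altSum T := by
  calc altSum (tensorMap M T) = ∑ h, T h * (M.submatrix id h).det := by
        simp only [altSum, tensorMap, det_apply', submatrix_apply, id, mul_sum]
        rw [sum_comm]
        exact sum_congr rfl fun h _ => sum_congr rfl fun σ _ => by ring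
    _ = ∑ σ : Perm κ, T σ * (M.submatrix id σ).det := by
        refine Fintype.sum_eq_sum_perm_of_not_injective fun h hh => ?_
        obtain ⟨i, j, hij, hne⟩ : ∃ i j, h i = h j ∧ i ≠ j := by
          simpa [Injective] using hh
        rw [det_zero_of_column_eq hne fun k => by simp [hij], mul_zero]
    _ = M.det * altSum T := by
        simp only [det_permute', altSum, mul_sum]
        exact sum_congr rfl fun σ _ => by ring

end Tensor

theorem Matrix.mul_mul_transpose_apply {m n R : Type*} [Fintype n] [CommSemiring R]
    (M : Matrix m n R) (B : Matrix n n R) (x y : m) :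
    (M * B * Mᵀ) x y = ∑ p : n × n, M x p.1 * B p.1 p.2 * M y p.2 := by
  simp only [mul_apply, transpose_apply, sum_mul, Fintype.sum_prod_type]
  exact sum_comm

def pairFunEquiv {ι κ : Type*} (e : ι × Fin 2 ≃ κ) : (κ → κ) ≃ (ι → κ × κ) :=
  (e.arrowCongr (Equiv.refl κ)).symm.trans <|
    (Equiv.curry ι (Fin 2) κ).trans (Equiv.piCongrRight fun _ => piFinTwoEquiv fun _ => κ)

theorem pairFunEquiv_apply {ι κ : Type*} (e : ι × Fin 2 ≃ κ) (h : κ → κ) (i : ι) :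
    pairFunEquiv e h i = (h (e (i, 0)), h (e (i, 1))) :=
  rfl

def pairProd {ι κ R : Type*} [Fintype ι] [CommMonoid R] (e : ι × Fin 2 ≃ κ)
    (B : ι → Matrix κ κ R) (f : κ → κ) : R :=
  ∏ i, B i (f (e (i, 0))) (f (e (i, 1)))

theorem pairProd_conj {ι κ R : Type*} [Fintype ι] [DecidableEq ι] [Fintype κ] [DecidableEq κ]
    [CommRing R] (e : ι × Fin 2 ≃ κ) (M : Matrix κ κ R) (B : ι → Matrix κ κ R) :
    pairProd e (fun i => M * B i * Mᵀ) = tensorMap M (pairProd e B) := by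
  funext f
  simp only [pairProd, tensorMap, mul_mul_transpose_apply, Fintype.prod_sum]
  refine (Fintype.sum_equiv (pairFunEquiv e) _ _ fun h => ?_).symm
  rw [← e.prod_comp, Fintype.prod_prod_type, ← prod_mul_distrib]
  refine prod_congr rfl fun i _ => ?_
  simp only [pairFunEquiv_apply, Fin.prod_univ_two]
  ring

def finPairEquiv {n : ℕ} (hn : Even n) : Fin (n / 2) × Fin 2 ≃ Fin n :=
  finProdFinEquiv.trans (finCongr (Nat.div_mul_cancel (even_iff_two_dvd.mp hn)))

theorem Qfun_eq_altSum (K : Type) [Field K] {n : ℕ} (hn : Even n)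
    (A : Fin (n / 2) → Matrix (Fin n) (Fin n) K) :
    Qfun K n A = altSum (pairProd (finPairEquiv hn) fun i => A i - (A i)ᵀ) := by
  have hval : ∀ i j, (finPairEquiv hn (i, j) : ℕ) = 2 * i + j := fun i j => by
    simp only [finPairEquiv, trans_apply, finCongr_apply, Fin.val_cast, finProdFinEquiv_apply_val]
    omega
  have h0 : ∀ i, finPairEquiv hn (i, 0) = ⟨2 * i.1, by omega⟩ := fun i => Fin.ext (hval i 0)
  have h1 : ∀ i, finPairEquiv hn (i, 1) = ⟨2 * i.1 + 1, by omega⟩ := fun i => Fin.ext (hval i 1)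
  simp [Qfun, altSum, pairProd, h0, h1]

theorem stmt_10_general (K : Type) [Field K] (n : ℕ) (hn : Even n)
    (g : Matrix (Fin n) (Fin n) K) (hg : g * gᵀ = 1) (hgdet : g.det = 1)
    (A : Fin (n / 2) → Matrix (Fin n) (Fin n) K) :
    Qfun K n (fun i => g * A i * g⁻¹) = Qfun K n A := by
  have hskew : ∀ i, g * A i * gᵀ - (g * A i * gᵀ)ᵀ = g * (A i - (A i)ᵀ) * gᵀ := fun i => by
    simp [transpose_mul, mul_sub, sub_mul, Matrix.mul_assoc]
  simp only [inv_eq_right_inv hg, Qfun_eq_altSum K hn, hskew, pairProd_conj, altSum_tensorMap,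
    hgdet, one_mul]

/-- `Q_n` is invariant under simultaneous conjugation by `SO(n,K)`. -/
theorem stmt_10 (K : Type) [Field K] [CharZero K] (n : ℕ) (hn : Even n)
    (g : Matrix (Fin n) (Fin n) K) (hg : g * gᵀ = 1) (hgdet : g.det = 1)
    (A : Fin (n / 2) → Matrix (Fin n) (Fin n) K) :
    Qfun K n (fun i => g * A i * g⁻¹) = Qfun K n A :=
  stmt_10_general K n hn g hg hgdet A
end

section
/- Let K be a field of characteristic zero, n ≥ 1, and let R be a commutative associative (possibly non-unital) K-algebra such that rⁿ = 0 for every r ∈ R. Then r₁·r₂·…·r_n = 0 for all r₁,…,r_n ∈ R; that is, the nilpotency index of R is at most n. -/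
/-!
Inside the unitization of `R`, the `K`-subspace `M = R` satisfies `xⁿ = 0`. By induction on `l`,
`a ^ (k + 1) * b₁ ⋯ bₗ = 0` for `a, bᵢ ∈ M` and `k + 1 + l = n`. In the inductive step, with
`P = b₂ ⋯ bₗ`, the hypothesis for `a + c • b₁` says that `(a + c • b₁) ^ (k + 2) * P`, a
polynomial in `c`, vanishes on the infinite field `K`, so all its coefficients vanish. The
coefficient of `c` is `(k + 2) • a ^ (k + 1) * b₁ * P`, and `k + 2` is invertible in
characteristic zero.
-/

open Finset

open Polynomial in
theorem eq_zero_of_forall_sum_pow_smul_eq_zero {K V : Type*} [Field K] [Infinite K]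
    [AddCommGroup V] [Module K V] {s : Finset ℕ} {v : ℕ → V}
    (h : ∀ c : K, ∑ k ∈ s, c ^ k • v k = 0) {k : ℕ} (hk : k ∈ s) : v k = 0 := by
  refine (Module.forall_dual_apply_eq_zero_iff K (v k)).mp fun φ => ?_
  have hp : ∑ j ∈ s, C (φ (v j)) * X ^ j = 0 := by
    refine Polynomial.funext fun c => ?_
    have := congrArg φ (h c)
    simp only [map_sum, map_smul, smul_eq_mul, map_zero] at this
    simp only [eval_finsetSum, eval_mul, eval_C, eval_pow, eval_X, eval_zero]
    rw [← this]
    exact sum_congr rfl fun j _ => mul_comm _ _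
  simpa [finsetSum_coeff, coeff_C_mul_X_pow, hk] using congrArg (coeff · k) hp

section Polarization

variable {K A : Type*} [Field K] [CharZero K] [CommRing A] [Algebra K A]

theorem pow_mul_mul_eq_zero_of_forall_add_smul_pow_mul_eq_zero {a b P : A} {m : ℕ}
    (h : ∀ c : K, (a + c • b) ^ (m + 1) * P = 0) : a ^ m * b * P = 0 := by
  have hexpand : ∀ c : K, ∑ j ∈ range (m + 1 + 1),
      c ^ j • ((m + 1).choose j • (b ^ j * a ^ (m + 1 - j) * P)) = 0 := by
    intro c
    rw [← h c, add_comm a, add_pow, sum_mul]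
    refine sum_congr rfl fun j _ => ?_
    rw [smul_pow, nsmul_eq_mul, smul_mul_assoc, smul_mul_assoc, smul_mul_assoc]
    ring_nf
  have hcoeff := eq_zero_of_forall_sum_pow_smul_eq_zero hexpand (k := 1) (by simp)
  have hunit : ((m + 1 : ℕ) : K) • (a ^ m * b * P) = 0 := by
    rw [Nat.cast_smul_eq_nsmul, ← hcoeff]
    simp only [Nat.choose_one_right, pow_one, Nat.add_sub_cancel]
    ring_nf
  exact (smul_eq_zero.mp hunit).resolve_left (Nat.cast_ne_zero.mpr m.succ_ne_zero)

variable {M : Submodule K A} {n : ℕ}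

theorem pow_mul_list_prod_eq_zero_of_forall_pow_eq_zero (hM : ∀ x ∈ M, x ^ n = 0) :
    ∀ (l : List A), (∀ y ∈ l, y ∈ M) → ∀ a ∈ M, ∀ k : ℕ, k + 1 + l.length = n →
      a ^ (k + 1) * l.prod = 0
  | [], _, a, ha, k, hlen => by simpa [← hlen] using hM a ha
  | b :: l, hl, a, ha, k, hlen => by
    have hb : b ∈ M := hl b List.mem_cons_self
    have hl' : ∀ y ∈ l, y ∈ M := fun y hy => hl y (List.mem_cons_of_mem b hy)
    have hshift : ∀ c : K, (a + c • b) ^ (k + 1 + 1) * l.prod = 0 := fun c =>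
      pow_mul_list_prod_eq_zero_of_forall_pow_eq_zero hM l hl' _
        (M.add_mem ha (M.smul_mem c hb)) (k + 1) (by simp at hlen; omega)
    rw [List.prod_cons, ← mul_assoc]
    exact pow_mul_mul_eq_zero_of_forall_add_smul_pow_mul_eq_zero hshift

theorem Submodule.list_prod_eq_zero_of_forall_pow_eq_zero (hM : ∀ x ∈ M, x ^ n = 0)
    {l : List A} (hl : ∀ y ∈ l, y ∈ M) (hlen : l.length = n) : l.prod = 0 := by
  cases l with
  | nil =>
    have hA : (1 : A) = 0 := by simpa [← hlen] using hM 0 M.zero_mem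
    simp [hA]
  | cons a l =>
    simpa using pow_mul_list_prod_eq_zero_of_forall_pow_eq_zero hM l
      (fun y hy => hl y (List.mem_cons_of_mem a hy)) a (hl a List.mem_cons_self) 0
      (by simp at hlen; omega)

end Polarization

theorem Unitization.inr_foldl_mul {K R : Type*} [CommSemiring K] [NonUnitalSemiring R]
    [Module K R] [IsScalarTower K R R] [SMulCommClass K R R] (a : R) (l : List R) :
    (Unitization.inr (List.foldl (· * ·) a l) : Unitization K R) =
      ((a :: l).map Unitization.inr).prod := by
  induction l generalizing a with
  | nil => simp
  | cons b l ih => simp [ih, Unitization.inr_mul, mul_assoc]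

theorem stmt_13_general (K R : Type) [Field K] [CharZero K]
    [NonUnitalCommRing R] [Module K R] [SMulCommClass K R R] [IsScalarTower K R R]
    (n : ℕ)
    (hnil : ∀ r : R, List.foldl (· * ·) r (List.replicate (n - 1) r) = 0) :
    ∀ (a : R) (l : List R), l.length + 1 = n → List.foldl (· * ·) a l = 0 := by
  intro a l hlen
  subst hlen
  let M : Submodule K (Unitization K R) := LinearMap.range (Unitization.inrHom K K R)
  have hM : ∀ x ∈ M, x ^ (l.length + 1) = 0 := by
    rintro _ ⟨r, rfl⟩
    simpa [Unitization.inr_foldl_mul, List.prod_replicate, pow_succ'] using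
      congrArg ((↑) : R → Unitization K R) (hnil r)
  apply Unitization.inr_injective (R := K)
  rw [Unitization.inr_foldl_mul, Unitization.inr_zero]
  refine M.list_prod_eq_zero_of_forall_pow_eq_zero hM ?_ (by simp)
  simpa only [List.forall_mem_map] using fun r _ => ⟨r, rfl⟩

/-- commutative Nagata–Higman: if `R` is a commutative, associative,
possibly non-unital algebra over a field of characteristic zero in which `rⁿ = 0` for
all `r` (here `r * r * ⋯ * r`, `n` factors, is written as a fold), then any product of
`n` elements of `R` vanishes. -/
theorem stmt_13 (K R : Type) [Field K] [CharZero K]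
    [NonUnitalCommRing R] [Module K R] [SMulCommClass K R R] [IsScalarTower K R R]
    (n : ℕ) (hn : 1 ≤ n)
    (hnil : ∀ r : R, List.foldl (· * ·) r (List.replicate (n - 1) r) = 0) :
    ∀ (a : R) (l : List R), l.length + 1 = n → List.foldl (· * ·) a l = 0 :=
  stmt_13_general K R n hnil
end

section
/- Let K be an algebraically closed field of characteristic zero, let i ∈ K satisfy i² = −1, and let x ∈ K with x ≠ 0 and x² ≠ 1. Define A = (1/2)·[[x + x⁻¹, i(x − x⁻¹)], [−i(x − x⁻¹), x + x⁻¹]]. Then: (1) A ∈ SO(2,K), i.e., A·Aᵀ = I and det A = 1; (2) A ≠ Aᵀ, so A and Aᵀ determine distinct points of the SO(2,K)-character variety of ℤ (conjugation by the abelian group SO(2,K) is trivial); (3) Q₂(A) ≠ Q₂(Aᵀ), where Q₂(M) = 2(M₁₂ − M₂₁); yet (4) tr(A^k) = tr((Aᵀ)^k) for every integer k, so the trace functions do not distinguish these two points. -/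
open Matrix

/-- the explicit matrix `A ∈ SO(2,K)` built from `i` (a square root of
`−1`) and `x ≠ 0`, `x² ≠ 1`; `A` and `Aᵀ` are distinct, distinguished by
`Q₂(M) = 2(M₁₂ − M₂₁)`, but not by any trace `tr(A^k)`, `k ∈ ℤ`. -/
theorem stmt_18 (K : Type) [Field K] [IsAlgClosed K] [CharZero K]
    (i : K) (hi : i ^ 2 = -1) (x : K) (hx0 : x ≠ 0) (hx1 : x ^ 2 ≠ 1)
    (A : Matrix (Fin 2) (Fin 2) K)
    (hA : A = (1 / 2 : K) •
      !![x + x⁻¹, i * (x - x⁻¹); -i * (x - x⁻¹), x + x⁻¹]) :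
    (A * Aᵀ = 1 ∧ A.det = 1) ∧
    A ≠ Aᵀ ∧
    2 * (A 0 1 - A 1 0) ≠ 2 * (Aᵀ 0 1 - Aᵀ 1 0) ∧
    ∀ k : ℤ, (A ^ k).trace = (Aᵀ ^ k).trace := by
  have hxx : x * x⁻¹ = 1 := mul_inv_cancel₀ hx0
  have hi0 : i ≠ 0 := fun h => by simp [h] at hi
  have hd : x - x⁻¹ ≠ 0 := by
    intro h
    apply hx1
    have hxe : x = x⁻¹ := sub_eq_zero.mp h
    calc x ^ 2 = x * x⁻¹ := by rw [pow_two]; rw [← hxe]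
    _ = 1 := hxx
  set a := x + x⁻¹ with ha
  set b := x - x⁻¹ with hb
  have hab : a ^ 2 - b ^ 2 = 4 := by
    rw [ha, hb]
    have : (x + x⁻¹) ^ 2 - (x - x⁻¹) ^ 2 = 4 * (x * x⁻¹) := by ring
    rw [this, hxx]; ring
  have key : i * b ≠ 0 := mul_ne_zero hi0 hd
  have hT : Aᵀ = (1 / 2 : K) • !![a, -(i * b); i * b, a] := by
    subst hA
    ext p q
    fin_cases p <;> fin_cases q <;> simp
  refine ⟨⟨?_, ?_⟩, ?_, ?_, ?_⟩
  · rw [hT, hA]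
    ext p q
    fin_cases p <;> fin_cases q <;>
      simp [Matrix.mul_apply, Fin.sum_univ_two, Matrix.one_apply] <;>
      first
        | linear_combination ((x - x⁻¹) ^ 2 / 4) * hi + hxx
        | linear_combination (0 : K) * hi
  · rw [hA]
    simp [Matrix.det_fin_two]
    linear_combination ((x - x⁻¹) ^ 2 / 4) * hi + hxx
  · intro h
    have h01 := congrFun (congrFun h 0) 1
    rw [hT, hA] at h01
    simp at h01
    exact key (by linear_combination h01)
  · intro h
    rw [hT, hA] at h
    simp at h
    apply key
    linear_combination h / 2
  · intro k
    rw [← Matrix.transpose_zpow, Matrix.trace_transpose]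
end
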